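/- (Gohberg–Sementsul–Trench formula) Let $A$ be an invertible $n\times n$ Toeplitz matrix, let $x=(x_1,\ldots,x_n)^\top$ be the first column and $y=(y_1,\ldots,y_n)^\top$ the last column of $A^{-1}$, and suppose $x_1\neq 0$. Then $A^{-1}=\frac{1}{x_1}\big(L(x)U(y)-L'(y)U'(x)\big)$, where $L(x)$ is the lower triangular Toeplitz matrix with first column $x$, $U(y)$ is the upper triangular Toeplitz matrix with first row $(y_n,\ldots,y_1)$, $L'(y)$ is the lower triangular Toeplitz matrix with first column $(0,y_1,\ldots,y_{n-1})^\top$, and $U'(x)$ is the upper triangular Toeplitz matrix with first row $(0,x_n,\ldots,x_2)$. -/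

import Mathlib

/-!
Index rows and columns by `0, …, m` and write `G = A⁻¹`, `Z` for the down-shift. For a Toeplitz
matrix, `A Z - Z A` vanishes outside the first row and the last column; applying `G` to this
identity expresses `Z (G w)` through `G (Z w)`, the first column of `G` and one auxiliary vector.
Taking `w = e_j` and `w = e_m` and eliminating the auxiliary vector gives the recursion
`G₀₀ (G_{i+1,j+1} - G_{i,j}) = G_{i+1,0} G_{0,j+1} - G_{i,m} G_{m,j}`.
Since the exchange matrix `J` satisfies `J A J = Aᵀ`, `G` is persymmetric, so its first row and
last row are the reversed last and first columns. The right-hand side of the formula has the same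
first row and column and satisfies the same recursion, hence equals `x₀ G`.
-/

open Matrix

def Matrix.IsToeplitz {α : Type*} {n : ℕ} (A : Matrix (Fin n) (Fin n) α) : Prop :=
  ∀ i j i' j' : Fin n, (i : ℤ) - j = i' - j' → A i j = A i' j'

def shiftDown {α : Type*} [Zero α] {m : ℕ} (u : Fin (m + 1) → α) : Fin (m + 1) → α :=
  Fin.cons 0 fun k => u k.castSucc

section shiftDown

variable {α : Type*} [Zero α] {m : ℕ}

@[simp] theorem shiftDown_zero (u : Fin (m + 1) → α) : shiftDown u 0 = 0 := rfl

@[simp] theorem shiftDown_succ (u : Fin (m + 1) → α) (k : Fin m) :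
    shiftDown u k.succ = u k.castSucc := rfl

@[simp] theorem shiftDown_single_castSucc (k : Fin m) (a : α) :
    shiftDown (Pi.single k.castSucc a) = Pi.single k.succ a := by
  ext i
  cases i using Fin.cases <;> simp [Pi.single_apply, Fin.succ_ne_zero]

@[simp] theorem shiftDown_single_last (a : α) : shiftDown (Pi.single (Fin.last m) a) = 0 := by
  ext i
  cases i using Fin.cases <;> simp [Fin.castSucc_ne_last]

end shiftDown

theorem Matrix.ext_of_succ_succ {α : Type*} [AddGroup α] {m : ℕ}
    {M N : Matrix (Fin (m + 1)) (Fin (m + 1)) α} (hrow : ∀ j, M 0 j = N 0 j)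
    (hcol : ∀ i, M i 0 = N i 0)
    (hsucc : ∀ i j : Fin m, M i.succ j.succ - M i.castSucc j.castSucc
      = N i.succ j.succ - N i.castSucc j.castSucc) : M = N := by
  ext i j
  induction i using Fin.induction generalizing j with
  | zero => exact hrow j
  | succ i ih =>
    cases j using Fin.cases with
    | zero => exact hcol _
    | succ j => simpa [ih j.castSucc] using hsucc i j

theorem Matrix.mul_apply_succ_succ {α : Type*} [NonUnitalNonAssocSemiring α] {m : ℕ}
    {L U : Matrix (Fin (m + 1)) (Fin (m + 1)) α}
    (hL : ∀ i j : Fin m, L i.succ j.succ = L i.castSucc j.castSucc)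
    (hU : ∀ i j : Fin m, U i.succ j.succ = U i.castSucc j.castSucc)
    (hL_last : ∀ i : Fin m, L i.castSucc (Fin.last m) = 0) (i j : Fin m) :
    (L * U) i.succ j.succ = L i.succ 0 * U 0 j.succ + (L * U) i.castSucc j.castSucc := by
  rw [mul_apply, mul_apply, Fin.sum_univ_succ, Fin.sum_univ_castSucc, hL_last, zero_mul, add_zero]
  simp only [hL, hU]

namespace Matrix.IsToeplitz

theorem submatrix_rev {α : Type*} {n : ℕ} {A : Matrix (Fin n) (Fin n) α} (hA : A.IsToeplitz) :
    A.submatrix Fin.rev Fin.rev = Aᵀ := by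
  ext i j
  exact hA _ _ _ _ (by simp only [Fin.val_rev]; omega)

section CommRing

variable {R : Type*} [CommRing R]

theorem inv_apply_rev {n : ℕ} {A : Matrix (Fin n) (Fin n) R} (hA : A.IsToeplitz) (i j : Fin n) :
    A⁻¹ j.rev i.rev = A⁻¹ i j := by
  have h := congr_arg Inv.inv hA.submatrix_rev
  change (A.submatrix Fin.revPerm Fin.revPerm)⁻¹ = Aᵀ⁻¹ at h
  rw [inv_submatrix_equiv, ← transpose_nonsing_inv] at h
  exact congr_fun (congr_fun h j) i

variable {m : ℕ} {A : Matrix (Fin (m + 1)) (Fin (m + 1)) R}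

theorem mulVec_shiftDown (hA : A.IsToeplitz) (u : Fin (m + 1) → R) :
    A *ᵥ shiftDown u = shiftDown (A *ᵥ u)
      + (∑ k : Fin m, A 0 k.succ * u k.castSucc) • Pi.single 0 1
      - u (Fin.last m) • shiftDown (A.col (Fin.last m)) := by
  ext i
  cases i using Fin.cases with
  | zero => simp [mulVec, dotProduct, Fin.sum_univ_succ]
  | succ i =>
    have hshift : ∀ k : Fin m, A i.succ k.succ = A i.castSucc k.castSucc := fun k =>
      hA _ _ _ _ (by simp)
    rw [mulVec, dotProduct, Fin.sum_univ_succ]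
    simp [hshift, mulVec, dotProduct, Fin.sum_univ_castSucc, mul_comm]

theorem shiftDown_inv_mulVec (hA : A.IsToeplitz) (hdet : IsUnit A.det) (w : Fin (m + 1) → R) :
    shiftDown (A⁻¹ *ᵥ w) = A⁻¹ *ᵥ shiftDown w
      + (∑ k : Fin m, A 0 k.succ * (A⁻¹ *ᵥ w) k.castSucc) • A⁻¹.col 0
      - (A⁻¹ *ᵥ w) (Fin.last m) • (A⁻¹ *ᵥ shiftDown (A.col (Fin.last m))) := by
  have h := congr_arg (A⁻¹ *ᵥ ·) (hA.mulVec_shiftDown (A⁻¹ *ᵥ w))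
  simpa only [mulVec_add, mulVec_sub, mulVec_smul, mulVec_mulVec, mul_nonsing_inv _ hdet,
    nonsing_inv_mul _ hdet, one_mulVec, mulVec_single_one] using h

theorem inv_apply_succ_succ [IsDomain R] (hA : A.IsToeplitz) (hdet : IsUnit A.det)
    (h00 : A⁻¹ 0 0 ≠ 0) (i j : Fin m) :
    A⁻¹ 0 0 * (A⁻¹ i.succ j.succ - A⁻¹ i.castSucc j.castSucc)
      = A⁻¹ i.succ 0 * A⁻¹ 0 j.succ
        - A⁻¹ i.castSucc (Fin.last m) * A⁻¹ (Fin.last m) j.castSucc := by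
  have hcol := hA.shiftDown_inv_mulVec hdet (Pi.single j.castSucc 1)
  have hlast := hA.shiftDown_inv_mulVec hdet (Pi.single (Fin.last m) 1)
  have hcorner : A⁻¹ (Fin.last m) (Fin.last m) = A⁻¹ 0 0 := by
    simpa using hA.inv_apply_rev 0 0
  have hcol_zero := congr_fun hcol 0
  have hcol_succ := congr_fun hcol i.succ
  have hlast_zero := congr_fun hlast 0
  have hlast_succ := congr_fun hlast i.succ
  simp only [shiftDown_single_castSucc, shiftDown_single_last, mulVec_zero, mulVec_single_one,
    Pi.add_apply, Pi.sub_apply, Pi.smul_apply, smul_eq_mul, shiftDown_zero, shiftDown_succ,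
    col_apply, Pi.zero_apply, hcorner] at hcol_zero hcol_succ hlast_zero hlast_succ
  set c := ∑ k : Fin m, A 0 k.succ * A⁻¹ k.castSucc (Fin.last m)
  set β := A⁻¹ *ᵥ shiftDown (A.col (Fin.last m))
  have hβ : β 0 = c := mul_left_cancel₀ h00 (by linear_combination hlast_zero)
  linear_combination (-A⁻¹ 0 0) * hcol_succ + A⁻¹ i.succ 0 * hcol_zero
    + A⁻¹ (Fin.last m) j.castSucc * (hlast_succ - A⁻¹ i.succ 0 * hβ)

end CommRing

end Matrix.IsToeplitz

section GohbergSemencul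

variable {R : Type*} [CommRing R]

def gohbergSemencul (n : ℕ) (x y : ℕ → R) : Matrix (Fin n) (Fin n) R :=
  (Matrix.of fun i j : Fin n => if (j : ℕ) ≤ (i : ℕ) then x ((i : ℕ) - (j : ℕ)) else 0) *
    (Matrix.of fun i j : Fin n =>
      if (i : ℕ) ≤ (j : ℕ) then y (n - 1 - ((j : ℕ) - (i : ℕ))) else 0) -
  (Matrix.of fun i j : Fin n =>
      if (j : ℕ) < (i : ℕ) then y ((i : ℕ) - (j : ℕ) - 1) else 0) *
    (Matrix.of fun i j : Fin n =>
      if (i : ℕ) < (j : ℕ) then x (n - ((j : ℕ) - (i : ℕ))) else 0)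

variable {m : ℕ} (x y : ℕ → R)

theorem gohbergSemencul_zero_apply (j : Fin (m + 1)) :
    gohbergSemencul (m + 1) x y 0 j = x 0 * y (m - j) := by
  simp [gohbergSemencul, mul_apply, Fin.sum_univ_succ]

theorem gohbergSemencul_apply_zero (i : Fin (m + 1)) :
    gohbergSemencul (m + 1) x y i 0 = x i * y m := by
  simp [gohbergSemencul, mul_apply]

theorem gohbergSemencul_succ_succ (i j : Fin m) :
    gohbergSemencul (m + 1) x y i.succ j.succ = gohbergSemencul (m + 1) x y i.castSucc j.castSucc
      + x (i + 1) * y (m - (j + 1)) - y i * x (m - j) := by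
  simp only [gohbergSemencul, Matrix.sub_apply]
  rw [mul_apply_succ_succ, mul_apply_succ_succ]
  · simp only [of_apply, Fin.val_zero, Fin.val_succ, zero_le, Nat.succ_pos, ↓reduceIte,
      Nat.sub_zero, Nat.add_sub_cancel, Nat.add_sub_add_right]
    ring
  all_goals intros; simp [Nat.add_sub_add_right, (Fin.castSucc_lt_last _).not_gt]

end GohbergSemencul

theorem stmt_15 (n : ℕ) (hn : 1 ≤ n)
    (A : Matrix (Fin n) (Fin n) ℂ)
    (hToep : ∀ i j i' j' : Fin n, (i : ℤ) - (j : ℤ) = (i' : ℤ) - (j' : ℤ) → A i j = A i' j')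
    (hA : IsUnit A.det)
    (x y : ℕ → ℂ)
    (hx : ∀ i : Fin n, x (i : ℕ) = A⁻¹ i ⟨0, by omega⟩)
    (hy : ∀ i : Fin n, y (i : ℕ) = A⁻¹ i ⟨n - 1, by omega⟩)
    (hx0 : x 0 ≠ 0) :
    A⁻¹ = (x 0)⁻¹ •
      ((Matrix.of fun i j : Fin n => if (j : ℕ) ≤ (i : ℕ) then x ((i : ℕ) - (j : ℕ)) else 0) *
       (Matrix.of fun i j : Fin n =>
          if (i : ℕ) ≤ (j : ℕ) then y (n - 1 - ((j : ℕ) - (i : ℕ))) else 0) -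
       (Matrix.of fun i j : Fin n =>
          if (j : ℕ) < (i : ℕ) then y ((i : ℕ) - (j : ℕ) - 1) else 0) *
       (Matrix.of fun i j : Fin n =>
          if (i : ℕ) < (j : ℕ) then x (n - ((j : ℕ) - (i : ℕ))) else 0)) := by
  obtain ⟨m, rfl⟩ : ∃ m, n = m + 1 := ⟨n - 1, by omega⟩
  have hT : A.IsToeplitz := hToep
  have hcol0 : ∀ i, A⁻¹ i 0 = x i := fun i => (hx i).symm
  have hcolm : ∀ i, A⁻¹ i (Fin.last m) = y i := fun i => (hy i).symm
  have hrow0 : ∀ j : Fin (m + 1), A⁻¹ 0 j = y (m - j) := fun j => by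
    rw [← hT.inv_apply_rev, Fin.rev_zero, hcolm, Fin.val_rev, Nat.add_sub_add_right]
  have hrowm : ∀ j : Fin (m + 1), A⁻¹ (Fin.last m) j = x (m - j) := fun j => by
    rw [← hT.inv_apply_rev, Fin.rev_last, hcol0, Fin.val_rev, Nat.add_sub_add_right]
  have hx00 : A⁻¹ 0 0 = x 0 := hcol0 0
  have hym : y m = x 0 := by simpa using (hcolm (Fin.last m)).symm.trans (hrowm (Fin.last m))
  change A⁻¹ = (x 0)⁻¹ • gohbergSemencul (m + 1) x y
  rw [eq_inv_smul_iff₀ hx0]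
  refine Matrix.ext_of_succ_succ (fun j => ?_) (fun i => ?_) (fun i j => ?_)
  · rw [Matrix.smul_apply, smul_eq_mul, hrow0, gohbergSemencul_zero_apply]
  · rw [Matrix.smul_apply, smul_eq_mul, hcol0, gohbergSemencul_apply_zero, hym, mul_comm]
  · rw [Matrix.smul_apply, Matrix.smul_apply, smul_eq_mul, smul_eq_mul, ← mul_sub, ← hx00,
      hT.inv_apply_succ_succ hA (hx00 ▸ hx0), gohbergSemencul_succ_succ]
    simp only [hcol0, hcolm, hrow0, hrowm, Fin.val_succ, Fin.val_castSucc]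
    ring
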